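/- Let g : [0,1] → [0,1] be a nondecreasing function, and for n ≥ 1 define F_n : [0,1] → ℝ by F_n(x) = ∏_{i=1}^n f(G^{i−1}(g(x))), where G^{i−1} denotes the (i−1)-fold iterate of G. If p > 1/2 then F_n is nondecreasing on [0,1], and if p < 1/2 then F_n is nonincreasing on [0,1]. -/
import Mathlib


open Set Filter Topology

/-- G(t) = t(t + 2q(1−t)). -/
noncomputable def G (q : ℝ) (t : ℝ) : ℝ := t * (t + 2*q*(1 - t))

/-- f(t) = 2p·t + 2q·(1−t). -/
noncomputable def f (p q : ℝ) (t : ℝ) : ℝ := 2*p*t + 2*q*(1 - t)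

/-- for a nondecreasing g : [0,1] → [0,1] and
F_n(x) = ∏_{i=1}^n f(G^{i−1}(g(x))) (n ≥ 1), F_n is nondecreasing on [0,1] if p > 1/2 and
nonincreasing on [0,1] if p < 1/2. -/
theorem density_monotone (p q : ℝ) (hp : 0 ≤ p) (hq : 0 ≤ q) (hpq : p + q = 1)
    (g : ℝ → ℝ) (hg : MonotoneOn g (Set.Icc 0 1)) (hg01 : Set.MapsTo g (Set.Icc 0 1) (Set.Icc 0 1))
    (n : ℕ) (hn : 1 ≤ n)
    (F : ℝ → ℝ) (hF : ∀ x, F x = ∏ i ∈ Finset.range n, f p q ((G q)^[i] (g x))) :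
    (p > 1/2 → MonotoneOn F (Set.Icc 0 1)) ∧ (p < 1/2 → AntitoneOn F (Set.Icc 0 1)) := by
  have hq1 : q ≤ 1 := by linarith
  have hGmap : Set.MapsTo (G q) (Set.Icc 0 1) (Set.Icc 0 1) := by
    intro t ht
    obtain ⟨h0, h1⟩ := ht
    constructor
    · unfold G; nlinarith [mul_nonneg hq (sub_nonneg.2 h1), mul_nonneg h0 h0]
    · unfold G
      nlinarith [mul_nonneg (sub_nonneg.2 h1) (sub_nonneg.2 h1),
        mul_nonneg hq (mul_nonneg (sub_nonneg.2 h1) (sub_nonneg.2 h1)),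
        mul_nonneg (sub_nonneg.2 hq1) (mul_nonneg h0 (sub_nonneg.2 h1))]
  have hGmono : MonotoneOn (G q) (Set.Icc 0 1) := by
    intro a ha b hb hab
    unfold G
    nlinarith [mul_nonneg (sub_nonneg.2 hab) (mul_nonneg ha.1 (sub_nonneg.2 hq1)),
      mul_nonneg (sub_nonneg.2 hab) (mul_nonneg hb.1 (sub_nonneg.2 hq1)),
      mul_nonneg (sub_nonneg.2 hab) (mul_nonneg hq (sub_nonneg.2 ha.2)),
      mul_nonneg (sub_nonneg.2 hab) (mul_nonneg hq (sub_nonneg.2 hb.2))]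
  have hitmap : ∀ i, Set.MapsTo ((G q)^[i]) (Set.Icc 0 1) (Set.Icc 0 1) :=
    fun i => hGmap.iterate i
  have hitmono : ∀ i, MonotoneOn ((G q)^[i]) (Set.Icc 0 1) := by
    intro i
    induction i with
    | zero => simpa using (monotoneOn_id : MonotoneOn id (Set.Icc (0:ℝ) 1))
    | succ k ih =>
      intro a ha b hb hab
      rw [Function.iterate_succ_apply', Function.iterate_succ_apply']
      exact hGmono (hitmap k ha) (hitmap k hb) (ih ha hb hab)
  have hfnonneg : ∀ t ∈ Set.Icc (0:ℝ) 1, 0 ≤ f p q t := by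
    intro t ht
    unfold f
    nlinarith [mul_nonneg hp ht.1, mul_nonneg hq (sub_nonneg.2 ht.2)]
  have hprodnonneg : ∀ m, ∀ x ∈ Set.Icc (0:ℝ) 1,
      0 ≤ ∏ i ∈ Finset.range m, f p q ((G q)^[i] x) := by
    intro m x hx
    exact Finset.prod_nonneg fun i _ => hfnonneg _ (hitmap i hx)
  constructor
  · intro hp2
    have hfmono : MonotoneOn (f p q) (Set.Icc 0 1) := by
      intro a _ b _ hab; unfold f; nlinarith
    have key : ∀ m, MonotoneOn
        (fun x => ∏ i ∈ Finset.range m, f p q ((G q)^[i] x)) (Set.Icc 0 1) := by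
      intro m
      induction m with
      | zero => simpa using (monotoneOn_const :
          MonotoneOn (fun _ : ℝ => (1:ℝ)) (Set.Icc 0 1))
      | succ k ih =>
        intro a ha b hb hab
        simp only [Finset.prod_range_succ]
        exact mul_le_mul (ih ha hb hab)
          (hfmono (hitmap k ha) (hitmap k hb) (hitmono k ha hb hab))
          (hfnonneg _ (hitmap k ha)) (hprodnonneg k b hb)
    intro a ha b hb hab
    rw [hF a, hF b]
    exact key n (hg01 ha) (hg01 hb) (hg ha hb hab)
  · intro hp2
    have hfanti : AntitoneOn (f p q) (Set.Icc 0 1) := by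
      intro a _ b _ hab; unfold f; nlinarith
    have key : ∀ m, AntitoneOn
        (fun x => ∏ i ∈ Finset.range m, f p q ((G q)^[i] x)) (Set.Icc 0 1) := by
      intro m
      induction m with
      | zero => simpa using (antitoneOn_const :
          AntitoneOn (fun _ : ℝ => (1:ℝ)) (Set.Icc 0 1))
      | succ k ih =>
        intro a ha b hb hab
        simp only [Finset.prod_range_succ]
        exact mul_le_mul (ih ha hb hab)
          (hfanti (hitmap k ha) (hitmap k hb) (hitmono k ha hb hab))
          (hfnonneg _ (hitmap k hb)) (hprodnonneg k a ha)
    intro a ha b hb hab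
    rw [hF a, hF b]
    exact key n (hg01 ha) (hg01 hb) (hg ha hb hab)
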